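/- Let G be a finite group with a symmetric generating subset S not containing the identity. If all eigenvalues of the Cayley graph Cay(G,S) are integers, then |G| divides 2·(2|S|-1)!. -/

import Mathlib

open Classical in
/-- Adjacency matrix of the Cayley graph `Cay(G,S)`: `x ~ y` iff `x * y⁻¹ ∈ S`. -/
noncomputable def cayleyMatrix {G : Type*} [Group G] (S : Set G) : Matrix G G ℝ :=
  fun x y => if x * y⁻¹ ∈ S then 1 else 0

/-- All eigenvalues of the real matrix `A` are integers. -/
noncomputable def isIntegralMatrix {n : Type*} [Finite n] (A : Matrix n n ℝ) : Prop :=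
  letI := Fintype.ofFinite n
  letI := Classical.decEq n
  ∀ μ : ℝ, Module.End.HasEigenvalue (Matrix.toLin' A) μ → ∃ z : ℤ, μ = (z : ℝ)

/-! Let `k = |S|` and `A = cayleyMatrix S`. The eigenvalues of `A` are integers in `[-k, k]`; the
`k`-eigenvectors are constant because `Cay(G, S)` is connected, and the `-k`-eigenvectors change
sign along every edge. So for `q = ∏_{|j| < k} (X - j)` the integer matrix `q(A)` only sees these
two eigenspaces, on which it acts by `±(2k-1)!`. For `s₀ ∈ S`, every eigenvector `f` for `-k` has
`f 1 + f s₀ = 0`, hence the sum of rows `1` and `s₀` of `q(A)` is the constant vector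
`2 (2k-1)! / |G|`, and its entries are integers. -/

open Matrix Polynomial

theorem isIntegralMatrix.exists_eq_intCast {n : Type*} [Fintype n] {A : Matrix n n ℝ}
    (hA : isIntegralMatrix A) {u : n → ℝ} (hu : u ≠ 0) {μ : ℝ} (h : A *ᵥ u = μ • u) :
    ∃ z : ℤ, μ = z := by
  classical
  unfold isIntegralMatrix at hA
  rw [Subsingleton.elim (Fintype.ofFinite n) ‹_›] at hA
  exact hA μ (Module.End.hasEigenvalue_of_hasEigenvector
    ⟨Module.End.mem_eigenspace_iff.mpr (by rwa [toLin'_apply]), hu⟩)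

theorem Matrix.aeval_mulVec_of_mulVec_eq_smul {R K n : Type*} [CommSemiring R] [CommRing K]
    [Algebra R K] [Fintype n] [DecidableEq n] {A : Matrix n n K} {u : n → K} {μ : K}
    (h : A *ᵥ u = μ • u) (p : R[X]) : aeval A p *ᵥ u = aeval μ p • u := by
  induction p using Polynomial.induction_on with
  | C a => simp [Algebra.algebraMap_eq_smul_one, smul_mulVec]
  | add p q hp hq => simp [add_mulVec, hp, hq, add_smul]
  | monomial m a ih =>
    rw [pow_succ, ← mul_assoc, map_mul, aeval_X, ← mulVec_mulVec, h, mulVec_smul, ih, smul_smul]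
    simp only [map_mul, aeval_X, mul_comm]

theorem Matrix.IsHermitian.eq_of_forall_dotProduct_eigenvectorBasis {𝕜 n : Type*} [RCLike 𝕜]
    [Fintype n] [DecidableEq n] {A : Matrix n n 𝕜} (hA : A.IsHermitian) {r r' : n → 𝕜}
    (h : ∀ j, r ⬝ᵥ ⇑(hA.eigenvectorBasis j) = r' ⬝ᵥ ⇑(hA.eigenvectorBasis j)) : r = r' := by
  have hU : r ᵥ* (hA.eigenvectorUnitary : Matrix n n 𝕜) = r' ᵥ* hA.eigenvectorUnitary := by
    ext j; exact h j
  simpa [vecMul_vecMul, Unitary.coe_mul_star_self] using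
    congrArg (· ᵥ* star (hA.eigenvectorUnitary : Matrix n n 𝕜)) hU

theorem Subgroup.apply_eq_apply_one_of_closure_eq_top {G α : Type*} [Group G] {S : Set G}
    (hgen : Subgroup.closure S = ⊤) {f : G → α} (hf : ∀ s ∈ S, ∀ x, f (s⁻¹ * x) = f x) (x : G) :
    f x = f 1 := by
  have key : ∀ g ∈ Subgroup.closure S, ∀ y, f (g * y) = f y := by
    intro g hg
    induction hg using Subgroup.closure_induction with
    | mem s hs => intro y; simpa using (hf s hs (s * y)).symm
    | one => simp
    | mul a b _ _ ha hb => intro y; rw [mul_assoc, ha, hb]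
    | inv a _ ha => intro y; rw [← ha, mul_inv_cancel_left]
  simpa using key x (hgen ▸ Subgroup.mem_top x) 1

section CayleyMatrix

variable {G : Type*} [Group G] [Fintype G] (S : Finset G)

theorem cayleyMatrix_mulVec_apply (v : G → ℝ) (x : G) :
    (cayleyMatrix (S : Set G) *ᵥ v) x = ∑ s ∈ S, v (s⁻¹ * x) := by
  classical
  have hrow : (cayleyMatrix (S : Set G) *ᵥ v) x = ∑ y, if x * y⁻¹ ∈ S then v y else 0 := by
    simp [mulVec, dotProduct, cayleyMatrix]
  rw [hrow, ← Finset.sum_filter]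
  refine Finset.sum_nbij' (fun y => x * y⁻¹) (fun s => s⁻¹ * x) ?_ ?_ ?_ ?_ ?_ <;> simp

omit [Fintype G] in
theorem isHermitian_cayleyMatrix (hsym : ∀ s ∈ S, s⁻¹ ∈ S) :
    (cayleyMatrix (S : Set G)).IsHermitian := by
  have hmem : ∀ x y : G, y * x⁻¹ ∈ S → x * y⁻¹ ∈ S := fun x y h => by simpa using hsym _ h
  ext x y
  simp only [cayleyMatrix, conjTranspose_apply, star_trivial]
  congr 1
  exact propext ⟨hmem x y, hmem y x⟩

theorem sum_cayleyMatrix_mulVec (v : G → ℝ) :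
    ∑ x, (cayleyMatrix (S : Set G) *ᵥ v) x = S.card * ∑ x, v x := by
  simp_rw [cayleyMatrix_mulVec_apply]
  rw [Finset.sum_comm, ← nsmul_eq_mul, ← Finset.sum_const]
  exact Finset.sum_congr rfl fun s _ => Equiv.sum_comp (Equiv.mulLeft s⁻¹) v

variable {S}

theorem sum_eq_zero_of_mulVec_eq_smul {v : G → ℝ} {μ : ℝ}
    (h : cayleyMatrix (S : Set G) *ᵥ v = μ • v) (hμ : μ ≠ S.card) : ∑ x, v x = 0 := by
  have hsum := sum_cayleyMatrix_mulVec S v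
  rw [h] at hsum
  simp only [Pi.smul_apply, smul_eq_mul, ← Finset.mul_sum] at hsum
  exact (mul_eq_mul_right_iff.mp hsum).resolve_left hμ

/-- A Dirichlet-form identity: the left side is a sum of squares, so `|μ| ≤ |S|`, with equality
only if every term vanishes. -/
theorem sum_sum_sq_eq_of_mulVec_eq_smul {v : G → ℝ} {μ : ℝ}
    (h : cayleyMatrix (S : Set G) *ᵥ v = μ • v) :
    ∑ x, ∑ s ∈ S, (S.card * v (s⁻¹ * x) - μ * v x) ^ 2
      = S.card * (S.card ^ 2 - μ ^ 2) * ∑ x, v x ^ 2 := by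
  have hrow : ∀ x, ∑ s ∈ S, v (s⁻¹ * x) = μ * v x := fun x => by
    rw [← cayleyMatrix_mulVec_apply, h, Pi.smul_apply, smul_eq_mul]
  have hshift : ∀ s : G, ∑ x, v (s⁻¹ * x) ^ 2 = ∑ x, v x ^ 2 := fun s =>
    Equiv.sum_comp (Equiv.mulLeft s⁻¹) (v · ^ 2)
  have hsq : ∑ x, ∑ s ∈ S, v (s⁻¹ * x) ^ 2 = S.card * ∑ x, v x ^ 2 := by
    rw [Finset.sum_comm]
    simp only [hshift, Finset.sum_const, nsmul_eq_mul]
  have hcross : ∑ x, ∑ s ∈ S, v x * v (s⁻¹ * x) = μ * ∑ x, v x ^ 2 := by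
    rw [Finset.mul_sum]
    refine Finset.sum_congr rfl fun x _ => ?_
    rw [← Finset.mul_sum, hrow]
    ring
  calc ∑ x, ∑ s ∈ S, (S.card * v (s⁻¹ * x) - μ * v x) ^ 2
      = ∑ x, ∑ s ∈ S, (S.card ^ 2 * v (s⁻¹ * x) ^ 2 - 2 * S.card * μ * (v x * v (s⁻¹ * x))
          + μ ^ 2 * v x ^ 2) :=
        Finset.sum_congr rfl fun x _ => Finset.sum_congr rfl fun s _ => by ring
    _ = S.card ^ 2 * ∑ x, ∑ s ∈ S, v (s⁻¹ * x) ^ 2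
        - 2 * S.card * μ * ∑ x, ∑ s ∈ S, v x * v (s⁻¹ * x)
        + S.card * μ ^ 2 * ∑ x, v x ^ 2 := by
        simp only [Finset.sum_add_distrib, Finset.sum_sub_distrib, ← Finset.mul_sum,
          Finset.sum_const, nsmul_eq_mul]
        ring
    _ = S.card * (S.card ^ 2 - μ ^ 2) * ∑ x, v x ^ 2 := by
        rw [hsq, hcross]
        ring

theorem abs_le_card_of_mulVec_eq_smul {v : G → ℝ} {μ : ℝ} (hv : v ≠ 0)
    (h : cayleyMatrix (S : Set G) *ᵥ v = μ • v) : |μ| ≤ S.card := by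
  rcases S.eq_empty_or_nonempty with rfl | hS
  · have hμv : μ • v = 0 := by
      rw [← h]
      funext x
      exact (cayleyMatrix_mulVec_apply ∅ v x).trans Finset.sum_empty
    simp [(smul_eq_zero.mp hμv).resolve_right hv]
  have hpos : 0 < ∑ x, v x ^ 2 := by
    obtain ⟨x, hx⟩ := Function.ne_iff.mp hv
    exact Finset.sum_pos' (fun y _ => sq_nonneg (v y))
      ⟨x, Finset.mem_univ x, pow_two_pos_of_ne_zero hx⟩
  have hnonneg : 0 ≤ (S.card : ℝ) * (S.card ^ 2 - μ ^ 2) * ∑ x, v x ^ 2 := by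
    rw [← sum_sum_sq_eq_of_mulVec_eq_smul h]
    positivity
  have hcard : (0 : ℝ) < S.card := by exact_mod_cast hS.card_pos
  have : μ ^ 2 ≤ (S.card : ℝ) ^ 2 := by
    nlinarith [(mul_nonneg_iff_of_pos_right hpos).mp hnonneg]
  simpa using sq_le_sq.mp this

theorem card_mul_apply_inv_mul_eq_of_sq_eq {v : G → ℝ} {μ : ℝ}
    (h : cayleyMatrix (S : Set G) *ᵥ v = μ • v) (hμ : μ ^ 2 = S.card ^ 2) :
    ∀ s ∈ S, ∀ x, S.card * v (s⁻¹ * x) = μ * v x := by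
  have hzero := sum_sum_sq_eq_of_mulVec_eq_smul h
  rw [hμ, sub_self, mul_zero, zero_mul,
    Finset.sum_eq_zero_iff_of_nonneg fun x _ => Finset.sum_nonneg fun s _ => sq_nonneg _] at hzero
  intro s hs x
  have := (Finset.sum_eq_zero_iff_of_nonneg fun s _ => sq_nonneg _).mp
    (hzero x (Finset.mem_univ x)) s hs
  exact sub_eq_zero.mp (pow_eq_zero_iff two_ne_zero |>.mp this)

theorem apply_eq_apply_one_of_mulVec_eq_card_smul (hgen : Subgroup.closure (S : Set G) = ⊤)
    {v : G → ℝ} (h : cayleyMatrix (S : Set G) *ᵥ v = (S.card : ℝ) • v) (x : G) : v x = v 1 := by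
  refine Subgroup.apply_eq_apply_one_of_closure_eq_top hgen (fun s hs y => ?_) x
  have hcard : (S.card : ℝ) ≠ 0 := by exact_mod_cast (Finset.card_pos.mpr ⟨s, hs⟩).ne'
  exact mul_left_cancel₀ hcard (card_mul_apply_inv_mul_eq_of_sq_eq h rfl s hs y)

theorem apply_inv_mul_eq_neg_of_mulVec_eq_neg_card_smul {v : G → ℝ}
    (h : cayleyMatrix (S : Set G) *ᵥ v = (-S.card : ℝ) • v) :
    ∀ s ∈ S, ∀ x, v (s⁻¹ * x) = -v x := by
  intro s hs x
  have hcard : (S.card : ℝ) ≠ 0 := by exact_mod_cast (Finset.card_pos.mpr ⟨s, hs⟩).ne'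
  refine mul_left_cancel₀ hcard ?_
  rw [card_mul_apply_inv_mul_eq_of_sq_eq h (neg_sq _) s hs x]
  ring

end CayleyMatrix

/-- `(X + k - 1)(X + k - 2) ⋯ (X - k + 1)`: its roots are the integers strictly between `-k`
and `k`. -/
noncomputable def centeredDescPochhammer (k : ℕ) : ℤ[X] :=
  (descPochhammer ℤ (2 * k - 1)).comp (X + C ((k : ℤ) - 1))

theorem eval_centeredDescPochhammer_of_abs_lt {k : ℕ} {z : ℤ} (hz : |z| < k) :
    (centeredDescPochhammer k).eval z = 0 := by
  obtain ⟨hlo, hhi⟩ := abs_lt.mp hz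
  obtain ⟨m, hm⟩ : ∃ m : ℕ, z + (k - 1) = m := ⟨(z + (k - 1)).toNat, by omega⟩
  have hmk : m < 2 * k - 1 := by omega
  rw [centeredDescPochhammer, eval_comp, eval_add, eval_X, eval_C, hm,
    descPochhammer_eval_eq_descFactorial, Nat.descFactorial_eq_zero_iff_lt.mpr hmk, Nat.cast_zero]

theorem eval_centeredDescPochhammer_self (k : ℕ) :
    (centeredDescPochhammer k).eval (k : ℤ) = (2 * k - 1).factorial := by
  rcases Nat.eq_zero_or_pos k with rfl | hk
  · simp [centeredDescPochhammer]
  have hcast : (k : ℤ) + (k - 1) = ((2 * k - 1 : ℕ) : ℤ) := by omega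
  rw [centeredDescPochhammer, eval_comp, eval_add, eval_X, eval_C, hcast,
    descPochhammer_eval_eq_descFactorial, Nat.descFactorial_self]

theorem exists_aeval_cayleyMatrix_eq_map_intCast {G : Type*} [Group G] [Fintype G]
    [DecidableEq G] (S : Set G) (p : ℤ[X]) :
    ∃ P : Matrix G G ℤ, aeval (cayleyMatrix S) p = P.map (Int.cast : ℤ → ℝ) := by
  classical
  let B : Matrix G G ℤ := of fun x y => if x * y⁻¹ ∈ S then 1 else 0
  have hB : (Algebra.ofId ℤ ℝ).mapMatrix B = cayleyMatrix S := by
    ext x y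
    simp [B, cayleyMatrix, apply_ite]
  exact ⟨aeval B p, by rw [← hB, aeval_algHom_apply]; rfl⟩

section Spectrum

variable {G : Type*} [Group G] [Fintype G] {S : Finset G}

theorem aeval_centeredDescPochhammer_mul_apply_add_apply
    (hgen : Subgroup.closure (S : Set G) = ⊤) (hint : isIntegralMatrix (cayleyMatrix (S : Set G)))
    {s₀ : G} (hs₀ : s₀ ∈ S) {u : G → ℝ} (hu0 : u ≠ 0) {μ : ℝ}
    (hu : cayleyMatrix (S : Set G) *ᵥ u = μ • u) :
    aeval μ (centeredDescPochhammer S.card) * (u 1 + u s₀)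
      = 2 * (2 * S.card - 1).factorial / Fintype.card G * ∑ x, u x := by
  obtain ⟨z, rfl⟩ := hint.exists_eq_intCast hu0 hu
  have hz : |z| ≤ S.card := by exact_mod_cast abs_le_card_of_mulVec_eq_smul hu0 hu
  have hcard : 0 < S.card := Finset.card_pos.mpr ⟨s₀, hs₀⟩
  have heval : aeval (z : ℝ) (centeredDescPochhammer S.card)
      = (((centeredDescPochhammer S.card).eval z : ℤ) : ℝ) := by
    simpa using aeval_algebraMap_apply_eq_algebraMap_eval (A := ℝ) z _
  obtain ⟨hlo, hhi⟩ := abs_le.mp hz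
  rcases (by omega : z = S.card ∨ z = -S.card ∨ -(S.card : ℤ) < z ∧ z < S.card)
    with rfl | rfl | hmid
  · have hconst := apply_eq_apply_one_of_mulVec_eq_card_smul hgen (by exact_mod_cast hu)
    rw [heval, eval_centeredDescPochhammer_self]
    simp only [hconst, Finset.sum_const, Finset.card_univ, nsmul_eq_mul]
    field_simp
    push_cast
    ring
  · have hμ : ((-S.card : ℤ) : ℝ) ≠ S.card := by
      have : (0 : ℝ) < S.card := by exact_mod_cast hcard
      push_cast
      linarith
    have hanti := apply_inv_mul_eq_neg_of_mulVec_eq_neg_card_smul (by exact_mod_cast hu) s₀ hs₀ s₀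
    rw [inv_mul_cancel] at hanti
    rw [sum_eq_zero_of_mulVec_eq_smul hu hμ, hanti]
    ring
  · have hμ : (z : ℝ) ≠ S.card := by exact_mod_cast hmid.2.ne
    rw [heval, eval_centeredDescPochhammer_of_abs_lt (abs_lt.mpr hmid),
      sum_eq_zero_of_mulVec_eq_smul hu hμ]
    simp

variable [DecidableEq G]

theorem aeval_centeredDescPochhammer_row_add_row (hsym : ∀ s ∈ S, s⁻¹ ∈ S)
    (hgen : Subgroup.closure (S : Set G) = ⊤) (hint : isIntegralMatrix (cayleyMatrix (S : Set G)))
    {s₀ : G} (hs₀ : s₀ ∈ S) :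
    aeval (cayleyMatrix (S : Set G)) (centeredDescPochhammer S.card) 1
      + aeval (cayleyMatrix (S : Set G)) (centeredDescPochhammer S.card) s₀
      = fun _ => (2 * (2 * S.card - 1).factorial / Fintype.card G : ℝ) := by
  have hA := isHermitian_cayleyMatrix S hsym
  set P := aeval (cayleyMatrix (S : Set G)) (centeredDescPochhammer S.card)
  have hrow (i : G) : P i = Pi.single i 1 ᵥ* P := by ext; simp
  rw [hrow 1, hrow s₀, ← add_vecMul]
  refine hA.eq_of_forall_dotProduct_eigenvectorBasis fun j => ?_
  have hu0 : ⇑(hA.eigenvectorBasis j) ≠ 0 := by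
    simpa using hA.eigenvectorBasis.orthonormal.ne_zero j
  rw [← dotProduct_mulVec, aeval_mulVec_of_mulVec_eq_smul (hA.mulVec_eigenvectorBasis j),
    dotProduct_smul, add_dotProduct, single_dotProduct, single_dotProduct, smul_eq_mul,
    one_mul, one_mul]
  rw [aeval_centeredDescPochhammer_mul_apply_add_apply hgen hint hs₀ hu0
    (hA.mulVec_eigenvectorBasis j)]
  simp [dotProduct, Finset.mul_sum]

end Spectrum

theorem card_dvd_two_mul_factorial_general (G : Type*) [Group G] [Fintype G]
    (S : Finset G)
    (hsym : ∀ s ∈ S, s⁻¹ ∈ S)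
    (hgen : Subgroup.closure (S : Set G) = ⊤)
    (hint : isIntegralMatrix (cayleyMatrix (S : Set G))) :
    Fintype.card G ∣ 2 * Nat.factorial (2 * S.card - 1) := by
  classical
  rcases S.eq_empty_or_nonempty with rfl | ⟨s₀, hs₀⟩
  · have htriv : ∀ g : G, g = 1 := fun g => by
      have hg : g ∈ Subgroup.closure ((∅ : Finset G) : Set G) := hgen ▸ Subgroup.mem_top g
      simpa using hg
    simp [Fintype.card_eq_one_iff.mpr ⟨1, htriv⟩]
  obtain ⟨P, hP⟩ :=
    exists_aeval_cayleyMatrix_eq_map_intCast (S : Set G) (centeredDescPochhammer S.card)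
  have hrow := congrFun (aeval_centeredDescPochhammer_row_add_row hsym hgen hint hs₀) 1
  rw [hP] at hrow
  have hcard : (Fintype.card G : ℝ) ≠ 0 := Nat.cast_ne_zero.mpr Fintype.card_ne_zero
  have hZ : ((Fintype.card G * (P 1 1 + P s₀ 1) : ℤ) : ℝ)
      = (2 * (2 * S.card - 1).factorial : ℕ) := by
    simp only [Pi.add_apply, map_apply] at hrow
    push_cast
    rw [hrow]
    field_simp
  exact Int.natCast_dvd_natCast.mp ⟨_, (Int.cast_injective hZ).symm⟩

theorem card_dvd_two_mul_factorial (G : Type*) [Group G] [Fintype G]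
    (S : Finset G)
    (hsym : ∀ s ∈ S, s⁻¹ ∈ S) (h1 : (1 : G) ∉ S)
    (hgen : Subgroup.closure (S : Set G) = ⊤)
    (hint : isIntegralMatrix (cayleyMatrix (S : Set G))) :
    Fintype.card G ∣ 2 * Nat.factorial (2 * S.card - 1) :=
  card_dvd_two_mul_factorial_general G S hsym hgen hint
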